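/- Let k = δ/√(2(1+δ²)) and let y(t) = δ·cn(t√(1+δ²), k) be the Duffing solution. Then ξ(t) = dn(t√(1+δ²), k) satisfies the Hill equation ξ'' + (−δ²/2 + y(t)²)·ξ = 0. -/

import Mathlib

/-!
Differentiating `dn' = -k² cn sn` once more gives
`dn'' = -k² (cn' sn + cn sn') = k² (sn² - cn²) dn = k² (1 - 2 cn²) dn`,
so `dn` solves the Hill equation `ξ'' + k² (2 cn² - 1) ξ = 0`. Rescaling time by
`ω = √(1 + δ²)` multiplies the second derivative by `ω²`, and the choice of `k` makes
`k² ω² = δ² / 2`, which turns this into `ξ'' + (-δ²/2 + δ² cn²) ξ = 0`.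
-/

theorem deriv_deriv_comp_mul_const {𝕜 : Type*} [NontriviallyNormedField 𝕜] (f : 𝕜 → 𝕜)
    (c t : 𝕜) : deriv (deriv fun s => f (s * c)) t = c ^ 2 * deriv (deriv f) (t * c) := by
  have hfirst : deriv (fun s => f (s * c)) = fun s => c * deriv f (c * s) := by
    funext s
    simp_rw [mul_comm _ c]
    exact deriv_comp_mul_left c f s
  rw [hfirst, deriv_const_mul_field, deriv_comp_mul_left c (deriv f) t, smul_eq_mul,
    mul_comm t c]
  ring

section Jacobi

variable {sn cn dn : ℝ → ℝ} {k : ℝ}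

theorem deriv_deriv_dn_eq (hsn : ∀ u, HasDerivAt sn (cn u * dn u) u)
    (hcn : ∀ u, HasDerivAt cn (-(sn u * dn u)) u)
    (hdn : ∀ u, HasDerivAt dn (-(k ^ 2 * cn u * sn u)) u)
    (hpyth : ∀ u, sn u ^ 2 + cn u ^ 2 = 1) (u : ℝ) :
    deriv (deriv dn) u = k ^ 2 * (1 - 2 * cn u ^ 2) * dn u := by
  have hdn' : deriv dn = fun v => -(k ^ 2 * cn v * sn v) := funext fun v => (hdn v).deriv
  rw [hdn', (((hcn u).const_mul (k ^ 2)).fun_mul (hsn u)).fun_neg.deriv]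
  linear_combination k ^ 2 * dn u * hpyth u

end Jacobi

theorem jacobi_dn_solves_hill_general (δ : ℝ) (sn cn dn : ℝ → ℝ → ℝ)
    (k : ℝ) (hk : k = δ / Real.sqrt (2 * (1 + δ^2)))
    (hsn : ∀ u, HasDerivAt (fun v => sn v k) (cn u k * dn u k) u)
    (hcn : ∀ u, HasDerivAt (fun v => cn v k) (-(sn u k * dn u k)) u)
    (hdn : ∀ u, HasDerivAt (fun v => dn v k) (-(k^2 * cn u k * sn u k)) u)
    (hpyth : ∀ u, (sn u k)^2 + (cn u k)^2 = 1) :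
    ∀ t : ℝ,
      deriv (deriv (fun s => dn (s * Real.sqrt (1 + δ^2)) k)) t
        + (-(δ^2 / 2) + (δ * cn (t * Real.sqrt (1 + δ^2)) k)^2)
          * dn (t * Real.sqrt (1 + δ^2)) k = 0 := by
  intro t
  have hkω : k ^ 2 * Real.sqrt (1 + δ ^ 2) ^ 2 = δ ^ 2 / 2 := by
    rw [hk, div_pow, Real.sq_sqrt (by positivity), Real.sq_sqrt (by positivity)]
    field_simp
  rw [deriv_deriv_comp_mul_const (fun v => dn v k),
    deriv_deriv_dn_eq hsn hcn hdn hpyth]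
  linear_combination (1 - 2 * cn (t * Real.sqrt (1 + δ ^ 2)) k ^ 2)
    * dn (t * Real.sqrt (1 + δ ^ 2)) k * hkω

theorem jacobi_dn_solves_hill (δ : ℝ) (sn cn dn : ℝ → ℝ → ℝ)
    (k : ℝ) (hk : k = δ / Real.sqrt (2 * (1 + δ^2)))
    (hsn : ∀ u, HasDerivAt (fun v => sn v k) (cn u k * dn u k) u)
    (hcn : ∀ u, HasDerivAt (fun v => cn v k) (-(sn u k * dn u k)) u)
    (hdn : ∀ u, HasDerivAt (fun v => dn v k) (-(k^2 * cn u k * sn u k)) u)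
    (hpyth : ∀ u, (sn u k)^2 + (cn u k)^2 = 1)
    (hdn2 : ∀ u, (dn u k)^2 - k^2 * (cn u k)^2 = 1 - k^2) :
    ∀ t : ℝ,
      deriv (deriv (fun s => dn (s * Real.sqrt (1 + δ^2)) k)) t
        + (-(δ^2 / 2) + (δ * cn (t * Real.sqrt (1 + δ^2)) k)^2)
          * dn (t * Real.sqrt (1 + δ^2)) k = 0 :=
  jacobi_dn_solves_hill_general δ sn cn dn k hk hsn hcn hdn hpyth
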